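/- arXiv:1909.06714 — 3 statements merged into one kernel-verified Lean document; each statement's English description precedes it below -/
import Mathlib

section
/- Let k be a field, and let G ∈ k[x0,x1,x2] with partial derivatives Gi = ∂G/∂xi. Let R0',R1',R2',R0'',R1'',R2'' ∈ k[x0,x1,x2], set U0 = R0'·G0 + R1'·G1 + R2'·G2, U1 = 1, U2 = R0''·G0 + R1''·G1 + R2''·G2, A0' = x1·R2' − x2·R1', A1'' = −x0·R2'' + x2·R0''. Define A = U0·x1·R0''·G0·G1 + U2·x0·R2'·G0·G2 + U0·x0·R0''·G0·G0 and B = A0'·U2·G1·G2 + U0·A1''·G0·G2 + U0·U1·U2·x0·G0. Then A − B belongs to the ideal of k[x0,x1,x2] generated by G0^2, G1^2, G2^2. -/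
open MvPolynomial

theorem massey_vanishes_cubic (k : Type*) [Field k]
    (G : MvPolynomial (Fin 3) k)
    (R0' R1' R2' R0'' R1'' R2'' : MvPolynomial (Fin 3) k)
    (G0 G1 G2 : MvPolynomial (Fin 3) k)
    (hG0 : G0 = pderiv 0 G) (hG1 : G1 = pderiv 1 G) (hG2 : G2 = pderiv 2 G)
    (U0 U1 U2 : MvPolynomial (Fin 3) k)
    (hU0 : U0 = R0' * G0 + R1' * G1 + R2' * G2)
    (hU1 : U1 = 1)
    (hU2 : U2 = R0'' * G0 + R1'' * G1 + R2'' * G2)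
    (A0' A1'' A B : MvPolynomial (Fin 3) k)
    (hA0' : A0' = X 1 * R2' - X 2 * R1')
    (hA1'' : A1'' = -(X 0) * R2'' + X 2 * R0'')
    (hA : A = U0 * X 1 * R0'' * G0 * G1 + U2 * X 0 * R2' * G0 * G2 + U0 * X 0 * R0'' * G0 * G0)
    (hB : B = A0' * U2 * G1 * G2 + U0 * A1'' * G0 * G2 + U0 * U1 * U2 * X 0 * G0) :
    A - B ∈ Ideal.span {G0 ^ 2, G1 ^ 2, G2 ^ 2} := by
  have key : A - B =
      (R0' * (X 1 * R0'' - X 0 * R1'') * G1 + R0'' * (X 0 * R2' - X 2 * R0') * G2) * G0 ^ 2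
    + (R1' * (X 1 * R0'' - X 0 * R1'') * G0 - R1'' * (X 1 * R2' - X 2 * R1') * G2) * G1 ^ 2
    + (R2' * (X 0 * R2'' - X 2 * R0'') * G0 - R2'' * (X 1 * R2' - X 2 * R1') * G1) * G2 ^ 2 := by
    subst hA hB hU0 hU1 hU2 hA0' hA1''
    ring
  rw [key]
  have h0 : G0 ^ 2 ∈ Ideal.span {G0 ^ 2, G1 ^ 2, G2 ^ 2} := Ideal.subset_span (by simp)
  have h1 : G1 ^ 2 ∈ Ideal.span {G0 ^ 2, G1 ^ 2, G2 ^ 2} := Ideal.subset_span (by simp)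
  have h2 : G2 ^ 2 ∈ Ideal.span {G0 ^ 2, G1 ^ 2, G2 ^ 2} := Ideal.subset_span (by simp)
  exact Ideal.add_mem _ (Ideal.add_mem _ (Ideal.mul_mem_left _ _ h0) (Ideal.mul_mem_left _ _ h1))
    (Ideal.mul_mem_left _ _ h2)
end

section
/- Let k be a field and G ∈ k[x0,x1,x2] with partials Gi = ∂G/∂xi. Suppose U0,U1,U2 ∈ k[x0,x1,x2] and R0',R1',R2',R0'',R1'',R2'' ∈ k[x0,x1,x2] satisfy U0·U1 = R0'·G0 + R1'·G1 + R2'·G2 and U1·U2 = R0''·G0 + R1''·G1 + R2''·G2. For T0,T1,T2 ∈ k[x0,x1,x2], set Ũ0 = U0 + T0·G0 + T1·G1 + T2·G2 and R̃i' = Ri' + Ti·U1 (so that Ũ0·U1 = R̃0'·G0 + R̃1'·G1 + R̃2'·G2). Define A0' = x1·R2' − x2·R1', A1'' = −x0·R2'' + x2·R0'', A = U0·x1·R0''·G0·G1 + U2·x0·R2'·G0·G2 + U0·x0·R0''·G0^2, B = A0'·U2·G1·G2 + U0·A1''·G0·G2 + U0·U1·U2·x0·G0, and define Ã, B̃ by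 the same formulas with U0 replaced by Ũ0 and Ri' replaced by R̃i'. Then (Ã − B̃) − (A − B) belongs to the ideal generated by G0^2, G1^2, G2^2. -/
open MvPolynomial

theorem massey_indep_of_representative (k : Type*) [Field k]
    (G : MvPolynomial (Fin 3) k)
    (G0 G1 G2 : MvPolynomial (Fin 3) k)
    (hG0 : G0 = pderiv 0 G) (hG1 : G1 = pderiv 1 G) (hG2 : G2 = pderiv 2 G)
    (U0 U1 U2 R0' R1' R2' R0'' R1'' R2'' T0 T1 T2 : MvPolynomial (Fin 3) k)
    (h01 : U0 * U1 = R0' * G0 + R1' * G1 + R2' * G2)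
    (h12 : U1 * U2 = R0'' * G0 + R1'' * G1 + R2'' * G2)
    (U0t R0t' R1t' R2t' : MvPolynomial (Fin 3) k)
    (hU0t : U0t = U0 + T0 * G0 + T1 * G1 + T2 * G2)
    (hR0t : R0t' = R0' + T0 * U1)
    (hR1t : R1t' = R1' + T1 * U1)
    (hR2t : R2t' = R2' + T2 * U1)
    (A0' A1'' A B A0t' At Bt : MvPolynomial (Fin 3) k)
    (hA0' : A0' = X 1 * R2' - X 2 * R1')
    (hA1'' : A1'' = -(X 0) * R2'' + X 2 * R0'')
    (hA : A = U0 * X 1 * R0'' * G0 * G1 + U2 * X 0 * R2' * G0 * G2 + U0 * X 0 * R0'' * G0 ^ 2)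
    (hB : B = A0' * U2 * G1 * G2 + U0 * A1'' * G0 * G2 + U0 * U1 * U2 * X 0 * G0)
    (hA0t' : A0t' = X 1 * R2t' - X 2 * R1t')
    (hAt : At = U0t * X 1 * R0'' * G0 * G1 + U2 * X 0 * R2t' * G0 * G2 + U0t * X 0 * R0'' * G0 ^ 2)
    (hBt : Bt = A0t' * U2 * G1 * G2 + U0t * A1'' * G0 * G2 + U0t * U1 * U2 * X 0 * G0) :
    (At - Bt) - (A - B) ∈ Ideal.span {G0 ^ 2, G1 ^ 2, G2 ^ 2} := by
  have key : (At - Bt) - (A - B) =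
      ((T0 * (X 1 * R0'' - X 0 * R1'')) * G1 + (T2 * X 0 * R0'' - T0 * X 2 * R0'') * G2) * G0 ^ 2
      + ((T1 * (X 1 * R0'' - X 0 * R1'')) * G0 - (X 1 * T2 - X 2 * T1) * R1'' * G2) * G1 ^ 2
      + ((T2 * X 0 * R2'' - T2 * X 2 * R0'') * G0 - (X 1 * T2 - X 2 * T1) * R2'' * G1) * G2 ^ 2 := by
    subst hU0t hR0t hR1t hR2t hA0' hA1'' hA hB hA0t' hAt hBt
    linear_combination (T2 * X 0 * G0 * G2 - (X 1 * T2 - X 2 * T1) * G1 * G2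
      - X 0 * (T0 * G0 + T1 * G1 + T2 * G2) * G0) * h12
  rw [key]
  refine Ideal.add_mem _ (Ideal.add_mem _ ?_ ?_) ?_ <;>
    exact Ideal.mul_mem_left _ _ (Ideal.subset_span (by simp))
end

section
/- With notation as in the Fermat quintic example (G = x0^5 + x1^5 + x2^5, Gi = ∂G/∂xi, U0 = −(1/6)x0^3x1^2x2^2, U1 = x2^2, U2 = (2/9)x0^4x2^3, R2' = −(1/30)x0^3x1^2, R2'' = (2/45)x0^4x2, all other Ri', Ri'' zero, and A, B defined by A = U0·x1·R0''·G0·G1 + U2·x0·R2'·G0·G2 + U0·x0·R0''·G0^2 and B = (x1·R2' − x2·R1')·U2·G1·G2 + U0·(−x0·R2'' + x2·R0'')·G0·G2 + U0·U1·U2·x0·G0), the polynomial A − B does NOT belong to the ideal of ℚ[x0,x1,x2] generated by G0^2, G1^2, G2^2. -/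
open MvPolynomial

theorem fermat_quintic_example_nonvanishing
    (G G0 G1 G2 U0 U1 U2 R0' R1' R2' R0'' R1'' R2'' A B : MvPolynomial (Fin 3) ℚ)
    (hG : G = X 0 ^ 5 + X 1 ^ 5 + X 2 ^ 5)
    (hG0 : G0 = pderiv 0 G) (hG1 : G1 = pderiv 1 G) (hG2 : G2 = pderiv 2 G)
    (hU0 : U0 = -(C (1/6 : ℚ)) * X 0 ^ 3 * X 1 ^ 2 * X 2 ^ 2)
    (hU1 : U1 = X 2 ^ 2)
    (hU2 : U2 = C (2/9 : ℚ) * X 0 ^ 4 * X 2 ^ 3)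
    (hR0' : R0' = 0) (hR1' : R1' = 0)
    (hR2' : R2' = -(C (1/30 : ℚ)) * X 0 ^ 3 * X 1 ^ 2)
    (hR0'' : R0'' = 0) (hR1'' : R1'' = 0)
    (hR2'' : R2'' = C (2/45 : ℚ) * X 0 ^ 4 * X 2)
    (hA : A = U0 * X 1 * R0'' * G0 * G1 + U2 * X 0 * R2' * G0 * G2 + U0 * X 0 * R0'' * G0 ^ 2)
    (hB : B = (X 1 * R2' - X 2 * R1') * U2 * G1 * G2
      + U0 * (-(X 0) * R2'' + X 2 * R0'') * G0 * G2 + U0 * U1 * U2 * X 0 * G0) :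
    A - B ∉ Ideal.span {G0 ^ 2, G1 ^ 2, G2 ^ 2} := by
  have hG0' : G0 = C (5:ℚ) * X 0 ^ 4 := by
    subst hG; rw [hG0]; simp [pderiv_X]; rfl
  have hG1' : G1 = C (5:ℚ) * X 1 ^ 4 := by
    rw [hG1, hG]; simp [pderiv_X]; rfl
  have hG2' : G2 = C (5:ℚ) * X 2 ^ 4 := by
    rw [hG2, hG]; simp [pderiv_X]; rfl
  set m : Fin 3 →₀ ℕ := Finsupp.single 0 7 + Finsupp.single 1 7 + Finsupp.single 2 7 with hm
  have hmon : ∀ (a b c : ℕ) (q : ℚ),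
      (monomial (Finsupp.single 0 a + Finsupp.single 1 b + Finsupp.single 2 c)
        q : MvPolynomial (Fin 3) ℚ) = C q * X 0 ^ a * X 1 ^ b * X 2 ^ c := by
    intro a b c q
    rw [X_pow_eq_monomial, X_pow_eq_monomial, X_pow_eq_monomial, C_apply]
    rw [monomial_mul, monomial_mul, monomial_mul]
    simp [add_assoc]
  have f1 : C (1/6) * C (2/9) * C (5:ℚ) = (C ((5:ℚ)/27) : MvPolynomial (Fin 3) ℚ) := by
    rw [← C_mul, ← C_mul]; norm_num
  have f2 : C (1/6) * C (2/45) * C (5:ℚ) * C (5:ℚ) = (C ((5:ℚ)/27) : MvPolynomial (Fin 3) ℚ) := by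
    rw [← C_mul, ← C_mul, ← C_mul]; norm_num
  have f3 : C (2/9) * C (1/30) * C (5:ℚ) * C (5:ℚ) = (C ((5:ℚ)/27) : MvPolynomial (Fin 3) ℚ) := by
    rw [← C_mul, ← C_mul, ← C_mul]; norm_num
  have hAB : A - B = monomial (Finsupp.single 0 12 + Finsupp.single 1 2 + Finsupp.single 2 7)
      (-(5/27 : ℚ)) + monomial m (5/27 : ℚ) := by
    subst hA hB hU0 hU1 hU2 hR0' hR1' hR2' hR0'' hR1'' hR2''
    rw [hG0', hG1', hG2', hm, hmon, hmon]
    rw [map_neg]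
    linear_combination (X 0:MvPolynomial (Fin 3) ℚ) ^ 12 * X 1 ^ 2 * X 2 ^ 7 * (f1 - f2 - f3)
      + X 0 ^ 7 * X 1 ^ 7 * X 2 ^ 7 * f3
  intro hmem
  rw [Ideal.mem_span_insert] at hmem
  obtain ⟨p, z, hz, heq⟩ := hmem
  rw [Ideal.mem_span_pair] at hz
  obtain ⟨q, r, rfl⟩ := hz
  have hcoeff := congrArg (coeff m) heq
  have hG0sq : G0 ^ 2 = monomial (Finsupp.single 0 8) (25:ℚ) := by
    rw [hG0', mul_pow, ← map_pow, ← pow_mul, X_pow_eq_monomial, C_mul_monomial]; norm_num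
  have hG1sq : G1 ^ 2 = monomial (Finsupp.single 1 8) (25:ℚ) := by
    rw [hG1', mul_pow, ← map_pow, ← pow_mul, X_pow_eq_monomial, C_mul_monomial]; norm_num
  have hG2sq : G2 ^ 2 = monomial (Finsupp.single 2 8) (25:ℚ) := by
    rw [hG2', mul_pow, ← map_pow, ← pow_mul, X_pow_eq_monomial, C_mul_monomial]; norm_num
  have hle : ∀ i : Fin 3, ¬ (Finsupp.single i 8 ≤ m) := by
    intro i hle
    have := hle i
    fin_cases i <;> simp [hm, Finsupp.single_apply] at this
  rw [hAB, hG0sq, hG1sq, hG2sq] at hcoeff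
  rw [coeff_add, coeff_add, coeff_add, coeff_mul_monomial', coeff_mul_monomial',
    coeff_mul_monomial', coeff_monomial, coeff_monomial] at hcoeff
  rw [if_neg (hle 0), if_neg (hle 1), if_neg (hle 2)] at hcoeff
  rw [if_pos rfl] at hcoeff
  have hne : (Finsupp.single 0 12 + Finsupp.single 1 2 + Finsupp.single 2 7 : Fin 3 →₀ ℕ) ≠ m := by
    intro h
    have := congrArg (fun f : Fin 3 →₀ ℕ => f 1) h
    simp [hm, Finsupp.single_apply] at this
  rw [if_neg hne] at hcoeff
  norm_num at hcoeff
end
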